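/- Let □axby and □a'x'b'y' be quadrangles in the Euclidean plane with equal corresponding side lengths, i.e. dist a x = dist a' x', dist x b = dist x' b', dist b y = dist b' y', dist y a = dist y' a'. Then dist a b < dist a' b' if and only if α(□axby) < α(□a'x'b'y'). (With the four side lengths fixed, the length of the diagonal [ab] is a strictly increasing function of α.) -/

import Mathlib

open EuclideanGeometry
set_option maxHeartbeats 1000000

abbrev Plane := EuclideanSpace ℝ (Fin 2)

noncomputable def triArea (p q r : Plane) : ℝ :=
  1 / 2 * dist q p * dist q r * Real.sin (∠ p q r)

def IsQuadrangle (a x b y : Plane) : Prop :=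
  a ≠ b ∧ (affineSpan ℝ {a, b}).SOppSide x y

noncomputable def quadArea (a x b y : Plane) : ℝ :=
  triArea a x b + triArea a y b

noncomputable def quadAlpha (a x b y : Plane) : ℝ :=
  ∠ a x b + ∠ a y b

lemma not_collinear_of_quad {a b x : Plane} (hab : a ≠ b)
    (hx : x ∉ affineSpan ℝ ({a, b} : Set Plane)) :
    ¬Collinear ℝ ({a, x, b} : Set Plane) := by
  intro h
  exact hx (h.mem_affineSpan_of_mem_of_ne (by simp) (by simp) (by simp) hab)

lemma key {a x b a' x' b' : Plane}
    (h1 : ¬Collinear ℝ ({a, x, b} : Set Plane))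
    (h1' : ¬Collinear ℝ ({a', x', b'} : Set Plane))
    (hax : dist a x = dist a' x') (hxb : dist x b = dist x' b') :
    dist a b < dist a' b' ↔ ∠ a x b < ∠ a' x' b' := by
  have hxa : x ≠ a := by
    rintro rfl; exact h1 (by simpa using collinear_pair ℝ x b)
  have hpos : (0:ℝ) < dist a x := dist_pos.2 (Ne.symm hxa)
  have hpos2 : (0:ℝ) < dist x b := by
    refine dist_pos.2 ?_
    rintro rfl; exact h1 (by simpa using collinear_pair ℝ a x)
  have lc := EuclideanGeometry.law_cos a x b
  have lc' := EuclideanGeometry.law_cos a' x' b'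
  rw [dist_comm x b, dist_comm x' b'] at hxb
  rw [← hax, ← hxb] at lc'
  have hmemb : ∠ a x b ∈ Set.Icc 0 Real.pi :=
    ⟨EuclideanGeometry.angle_nonneg _ _ _, EuclideanGeometry.angle_le_pi _ _ _⟩
  have hmemb' : ∠ a' x' b' ∈ Set.Icc 0 Real.pi :=
    ⟨EuclideanGeometry.angle_nonneg _ _ _, EuclideanGeometry.angle_le_pi _ _ _⟩
  have hpos2' : (0:ℝ) < dist b x := dist_comm x b ▸ hpos2
  have hc : (0:ℝ) < 2 * dist a x * dist b x := by positivity
  constructor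
  · intro h
    have h2 : dist a b * dist a b < dist a' b' * dist a' b' :=
      mul_self_lt_mul_self dist_nonneg h
    rw [lc, lc'] at h2
    have hcos : Real.cos (∠ a' x' b') < Real.cos (∠ a x b) :=
      (mul_lt_mul_iff_right₀ hc).mp (by linarith)
    exact (Real.strictAntiOn_cos.lt_iff_gt hmemb' hmemb).mp hcos
  · intro h
    have hcos : Real.cos (∠ a' x' b') < Real.cos (∠ a x b) :=
      Real.strictAntiOn_cos hmemb hmemb' h
    have h2 : dist a b * dist a b < dist a' b' * dist a' b' := by
      have := (mul_lt_mul_iff_right₀ hc).mpr hcos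
      rw [lc, lc']; linarith
    have h3 := Real.sqrt_lt_sqrt (mul_self_nonneg _) h2
    rwa [Real.sqrt_mul_self dist_nonneg, Real.sqrt_mul_self dist_nonneg] at h3

theorem quadrangle_diagonal_lt_iff_alpha_lt
    (a x b y a' x' b' y' : Plane)
    (hq : IsQuadrangle a x b y) (hq' : IsQuadrangle a' x' b' y')
    (hax : dist a x = dist a' x') (hxb : dist x b = dist x' b')
    (hby : dist b y = dist b' y') (hya : dist y a = dist y' a') :
    dist a b < dist a' b' ↔ quadAlpha a x b y < quadAlpha a' x' b' y' := by
  have hx := not_collinear_of_quad hq.1 hq.2.left_notMem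
  have hy := not_collinear_of_quad hq.1 hq.2.right_notMem
  have hx' := not_collinear_of_quad hq'.1 hq'.2.left_notMem
  have hy' := not_collinear_of_quad hq'.1 hq'.2.right_notMem
  have k1 := key hx hx' hax hxb
  have k2 := key hy hy' (by rw [dist_comm a y, dist_comm a' y']; exact hya)
    (by rw [dist_comm y b, dist_comm y' b']; exact hby)
  unfold quadAlpha
  constructor
  · intro h
    exact add_lt_add (k1.mp h) (k2.mp h)
  · intro h
    by_contra hle
    push_neg at hle
    have h1 : ¬ (∠ a x b < ∠ a' x' b') := fun hh => absurd (k1.mpr hh) (not_lt.2 hle)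
    have h2 : ¬ (∠ a y b < ∠ a' y' b') := fun hh => absurd (k2.mpr hh) (not_lt.2 hle)
    push_neg at h1 h2
    linarith
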